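/- arXiv:2410.16603 — 6 statements merged into one kernel-verified Lean document; each statement's English description precedes it below -/
import Mathlib

section
/- If f : 2^U → ℝ is submodular, then the discrete derivatives of its multilinear extension are pointwise antitone: for every i ∈ U and x ≤ y in [0,1]^U, F(x[i ↦ 1]) − F(x[i ↦ 0]) ≥ F(y[i ↦ 1]) − F(y[i ↦ 0]). -/
open Finset

/-- The multilinear extension of a set function `f`. -/
def mlext {α : Type*} [Fintype α] [DecidableEq α] (f : Finset α → ℝ) (x : α → ℝ) : ℝ :=
  ∑ S : Finset α, (∏ i ∈ S, x i) * (∏ i ∈ Sᶜ, (1 - x i)) * f S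

lemma mlext_deriv {α : Type*} [Fintype α] [DecidableEq α] (f : Finset α → ℝ) (i : α)
    (x : α → ℝ) :
    mlext f (Function.update x i 1) - mlext f (Function.update x i 0) =
      ∑ S ∈ ({i}ᶜ : Finset α).powerset,
        (∏ k ∈ S, x k) * (∏ k ∈ ({i}ᶜ : Finset α) \ S, (1 - x k)) *
          (f (insert i S) - f S) := by
  have hi : i ∉ ({i}ᶜ : Finset α) := by simp
  have huniv : insert i ({i}ᶜ : Finset α) = univ := by
    ext k; by_cases h : k = i <;> simp [h]
  have hexpand : ∀ u : α → ℝ, mlext f u =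
      ∑ S ∈ ({i}ᶜ : Finset α).powerset,
        (∏ k ∈ S, u k) * (∏ k ∈ Sᶜ, (1 - u k)) * f S +
      ∑ S ∈ ({i}ᶜ : Finset α).powerset,
        (∏ k ∈ insert i S, u k) * (∏ k ∈ (insert i S)ᶜ, (1 - u k)) * f (insert i S) := by
    intro u
    rw [mlext, ← Finset.powerset_univ, ← huniv, Finset.sum_powerset_insert hi]
  have hone : mlext f (Function.update x i 1) =
      ∑ S ∈ ({i}ᶜ : Finset α).powerset,
        (∏ k ∈ S, x k) * (∏ k ∈ ({i}ᶜ : Finset α) \ S, (1 - x k)) * f (insert i S) := by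
    rw [hexpand]
    have h1 : ∀ S ∈ ({i}ᶜ : Finset α).powerset,
        (∏ k ∈ S, Function.update x i 1 k) * (∏ k ∈ Sᶜ, (1 - Function.update x i 1 k)) * f S
          = 0 := by
      intro S hS
      have hiS : i ∉ S := fun h => hi (Finset.mem_powerset.mp hS h)
      have : (∏ k ∈ Sᶜ, (1 - Function.update x i 1 k)) = 0 := by
        apply Finset.prod_eq_zero (Finset.mem_compl.mpr hiS)
        simp
      rw [this]; ring
    rw [Finset.sum_congr rfl h1]
    simp only [Finset.sum_const_zero, zero_add]
    apply Finset.sum_congr rfl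
    intro S hS
    have hiS : i ∉ S := fun h => hi (Finset.mem_powerset.mp hS h)
    have hc : (insert i S)ᶜ = ({i}ᶜ : Finset α) \ S := by
      ext k; simp [and_comm]
    have hp1 : (∏ k ∈ insert i S, Function.update x i 1 k) = ∏ k ∈ S, x k := by
      rw [Finset.prod_insert hiS, Function.update_self, one_mul]
      exact Finset.prod_congr rfl fun k hk =>
        Function.update_of_ne (fun h => hiS (by rwa [h] at hk)) _ _
    have hp2 : (∏ k ∈ (insert i S)ᶜ, (1 - Function.update x i 1 k)) =
        ∏ k ∈ ({i}ᶜ : Finset α) \ S, (1 - x k) := by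
      rw [hc]
      refine Finset.prod_congr rfl fun k hk => ?_
      have hne : k ≠ i := by
        rcases Finset.mem_sdiff.mp hk with ⟨h1, _⟩
        simpa using h1
      rw [Function.update_of_ne hne]
    rw [hp1, hp2]
  have hzero : mlext f (Function.update x i 0) =
      ∑ S ∈ ({i}ᶜ : Finset α).powerset,
        (∏ k ∈ S, x k) * (∏ k ∈ ({i}ᶜ : Finset α) \ S, (1 - x k)) * f S := by
    rw [hexpand]
    have h2 : ∀ S ∈ ({i}ᶜ : Finset α).powerset,
        (∏ k ∈ insert i S, Function.update x i 0 k) *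
          (∏ k ∈ (insert i S)ᶜ, (1 - Function.update x i 0 k)) * f (insert i S) = 0 := by
      intro S hS
      have hiS : i ∉ S := fun h => hi (Finset.mem_powerset.mp hS h)
      have : (∏ k ∈ insert i S, Function.update x i 0 k) = 0 := by
        apply Finset.prod_eq_zero (Finset.mem_insert_self i S)
        simp
      rw [this]; ring
    rw [Finset.sum_congr rfl h2]
    simp only [Finset.sum_const_zero, add_zero]
    apply Finset.sum_congr rfl
    intro S hS
    have hiS : i ∉ S := fun h => hi (Finset.mem_powerset.mp hS h)
    have hc : Sᶜ = insert i (({i}ᶜ : Finset α) \ S) := by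
      ext k
      by_cases h : k = i
      · simp [h, hiS]
      · simp [h, and_comm]
    have hp1 : (∏ k ∈ S, Function.update x i 0 k) = ∏ k ∈ S, x k :=
      Finset.prod_congr rfl fun k hk =>
        Function.update_of_ne (fun h => hiS (by rwa [h] at hk)) _ _
    have hp2 : (∏ k ∈ Sᶜ, (1 - Function.update x i 0 k)) =
        ∏ k ∈ ({i}ᶜ : Finset α) \ S, (1 - x k) := by
      rw [hc, Finset.prod_insert (by simp), Function.update_self, sub_zero, one_mul]
      refine Finset.prod_congr rfl fun k hk => ?_
      have hne : k ≠ i := by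
        rcases Finset.mem_sdiff.mp hk with ⟨h1, _⟩
        simpa using h1
      rw [Function.update_of_ne hne]
    rw [hp1, hp2]
  rw [hone, hzero, ← Finset.sum_sub_distrib]
  apply Finset.sum_congr rfl
  intro S _
  ring

lemma mono_step {α : Type*} [DecidableEq α] (x y : α → ℝ)
    (hx : ∀ j, x j ∈ Set.Icc (0 : ℝ) 1) (hy : ∀ j, y j ∈ Set.Icc (0 : ℝ) 1)
    (hxy : ∀ j, x j ≤ y j) :
    ∀ (T : Finset α) (g : Finset α → ℝ),
      (∀ S ⊆ T, ∀ j ∈ T, j ∉ S → g (insert j S) ≤ g S) →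
      ∑ S ∈ T.powerset, (∏ k ∈ S, y k) * (∏ k ∈ T \ S, (1 - y k)) * g S ≤
      ∑ S ∈ T.powerset, (∏ k ∈ S, x k) * (∏ k ∈ T \ S, (1 - x k)) * g S := by
  intro T
  induction T using Finset.induction_on with
  | empty => intro g _; simp
  | @insert j T' hj ih =>
    intro g hg
    have key : ∀ z : α → ℝ,
        ∑ S ∈ (insert j T').powerset, (∏ k ∈ S, z k) * (∏ k ∈ insert j T' \ S, (1 - z k)) * g S
        = (1 - z j) * (∑ S ∈ T'.powerset, (∏ k ∈ S, z k) * (∏ k ∈ T' \ S, (1 - z k)) * g S)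
          + z j * (∑ S ∈ T'.powerset,
              (∏ k ∈ S, z k) * (∏ k ∈ T' \ S, (1 - z k)) * g (insert j S)) := by
      intro z
      rw [Finset.sum_powerset_insert hj]
      congr 1
      · rw [Finset.mul_sum]
        apply Finset.sum_congr rfl
        intro S hS
        have hjS : j ∉ S := fun h => hj (Finset.mem_powerset.mp hS h)
        rw [Finset.insert_sdiff_of_notMem _ hjS,
          Finset.prod_insert (fun h => hj (Finset.mem_sdiff.mp h).1)]
        ring
      · rw [Finset.mul_sum]
        apply Finset.sum_congr rfl
        intro S hS
        have hjS : j ∉ S := fun h => hj (Finset.mem_powerset.mp hS h)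
        have hsd : insert j T' \ insert j S = T' \ S := by
          ext k
          by_cases h : k = j
          · simp [h, hj]
          · simp [h]
        rw [hsd, Finset.prod_insert hjS]
        ring
    rw [key x, key y]
    set Ax := ∑ S ∈ T'.powerset, (∏ k ∈ S, x k) * (∏ k ∈ T' \ S, (1 - x k)) * g S with hAx
    set Ay := ∑ S ∈ T'.powerset, (∏ k ∈ S, y k) * (∏ k ∈ T' \ S, (1 - y k)) * g S with hAy
    set Bx := ∑ S ∈ T'.powerset, (∏ k ∈ S, x k) * (∏ k ∈ T' \ S, (1 - x k)) * g (insert j S)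
      with hBx
    set By := ∑ S ∈ T'.powerset, (∏ k ∈ S, y k) * (∏ k ∈ T' \ S, (1 - y k)) * g (insert j S)
      with hBy
    have hA : Ay ≤ Ax := ih g (fun S hS j' hj' hj'S =>
      hg S (hS.trans (Finset.subset_insert _ _)) j' (Finset.mem_insert_of_mem hj') hj'S)
    have hB : By ≤ Bx := by
      apply ih (fun S => g (insert j S))
      intro S hS j' hj' hj'S
      have hne : j' ≠ j := fun h => hj (h ▸ hj')
      rw [Finset.insert_comm]
      exact hg (insert j S) (Finset.insert_subset_insert _ hS) j'
        (Finset.mem_insert_of_mem hj') (by simp [hne, hj'S])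
    have hBA : By ≤ Ay := by
      apply Finset.sum_le_sum
      intro S hS
      have hjS : j ∉ S := fun h => hj (Finset.mem_powerset.mp hS h)
      have hP : 0 ≤ (∏ k ∈ S, y k) * (∏ k ∈ T' \ S, (1 - y k)) := by
        apply mul_nonneg
        · exact Finset.prod_nonneg fun k _ => (hy k).1
        · exact Finset.prod_nonneg fun k _ => by linarith [(hy k).2]
      have hgS : g (insert j S) ≤ g S :=
        hg S ((Finset.mem_powerset.mp hS).trans (Finset.subset_insert _ _)) j
          (Finset.mem_insert_self _ _) hjS
      exact mul_le_mul_of_nonneg_left hgS hP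
    have h0x : (0:ℝ) ≤ x j := (hx j).1
    have h1x : x j ≤ 1 := (hx j).2
    have hxyj : x j ≤ y j := hxy j
    nlinarith [mul_le_mul_of_nonneg_left hA (by linarith : (0:ℝ) ≤ 1 - x j),
      mul_le_mul_of_nonneg_left hB h0x,
      mul_le_mul_of_nonneg_right hBA (le_refl (0:ℝ)),
      mul_le_mul_of_nonneg_left (sub_nonpos.mpr hBA) (le_refl (0:ℝ))]

theorem stmt_6 {α : Type*} [Fintype α] [DecidableEq α] (f : Finset α → ℝ)
    (hsub : ∀ S T : Finset α, S ⊆ T → ∀ u ∉ T,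
      f (insert u T) - f T ≤ f (insert u S) - f S)
    (i : α) (x y : α → ℝ) (hx : ∀ j, x j ∈ Set.Icc (0 : ℝ) 1)
    (hy : ∀ j, y j ∈ Set.Icc (0 : ℝ) 1) (hxy : ∀ j, x j ≤ y j) :
    mlext f (Function.update y i 1) - mlext f (Function.update y i 0) ≤
      mlext f (Function.update x i 1) - mlext f (Function.update x i 0) := by
  rw [mlext_deriv, mlext_deriv]
  apply mono_step x y hx hy hxy
  intro S hS j hj hjS
  have hiS : i ∉ S := fun h => by simpa using hS h
  have hij : j ≠ i := by simpa using hj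
  have hiI : i ∉ insert j S := by simp [hij.symm, hiS]
  have := hsub S (insert j S) (Finset.subset_insert _ _) i hiI
  linarith
end

section
/- Let f : 2^U → ℝ be monotone and submodular with f(∅) ≥ 0, and let F be its multilinear extension. Then for every x ∈ [0,1]^U and every S ⊆ U, f(S) ≤ F(x) + Σ_{u ∈ S} (F(x[u ↦ 1]) − F(x[u ↦ 0])). In words, the value of any set is bounded by F(x) plus the sum of discrete partial derivatives of F at x over the elements of S. -/
open Finset

set_option linter.unusedSectionVars false
set_option linter.unusedVariables false

section aux
variable {α : Type*} [Fintype α] [DecidableEq α]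

private def mlw (x : α → ℝ) (T : Finset α) : ℝ :=
  (∏ i ∈ T, x i) * ∏ i ∈ Tᶜ, (1 - x i)

private lemma mlw_nonneg (x : α → ℝ) (hx : ∀ j, x j ∈ Set.Icc (0:ℝ) 1) (T : Finset α) :
    0 ≤ mlw x T :=
  mul_nonneg (prod_nonneg fun i _ => (hx i).1)
    (prod_nonneg fun i _ => by linarith [(hx i).2])

private lemma sum_mlw (x : α → ℝ) : ∑ T : Finset α, mlw x T = 1 := by
  have h := Finset.prod_add (fun i => x i) (fun i => 1 - x i) (univ : Finset α)
  simp only [add_sub_cancel, prod_const_one, powerset_univ] at h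
  rw [h]
  apply Finset.sum_congr rfl
  intro T _
  rw [mlw, compl_eq_univ_sdiff]

private lemma mlext_eq (f : Finset α → ℝ) (x : α → ℝ) :
    mlext f x = ∑ T : Finset α, mlw x T * f T := rfl

private lemma mlext_update_one (f : Finset α → ℝ) (x : α → ℝ) (u : α) :
    mlext f (Function.update x u 1) = ∑ R : Finset α, mlw x R * f (insert u R) := by
  rw [mlext_eq,
    ← Finset.sum_filter_add_sum_filter_not univ (fun T => u ∈ T)
      (fun T => mlw (Function.update x u 1) T * f T),
    ← Finset.sum_filter_add_sum_filter_not univ (fun R => u ∈ R)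
      (fun R => mlw x R * f (insert u R))]
  have hz : ∑ T ∈ univ.filter (fun T => u ∉ T),
      mlw (Function.update x u 1) T * f T = 0 := by
    apply Finset.sum_eq_zero
    intro T hT
    simp only [mem_filter] at hT
    have : ∏ i ∈ Tᶜ, (1 - Function.update x u 1 i) = 0 := by
      apply Finset.prod_eq_zero (Finset.mem_compl.mpr hT.2)
      simp
    simp [mlw, this]
  rw [hz, add_zero]
  -- reindex the second RHS sum over T with u ∈ T
  have hre : ∑ R ∈ univ.filter (fun R => u ∉ R), mlw x R * f (insert u R)
      = ∑ T ∈ univ.filter (fun T => u ∈ T), mlw x (T.erase u) * f T := by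
    refine Finset.sum_bij' (fun R _ => insert u R) (fun T _ => T.erase u)
      (fun R hR => by simp)
      (fun T hT => by simp only [mem_filter] at hT ⊢; exact ⟨mem_univ _, Finset.notMem_erase u T⟩)
      (fun R hR => by simp only [mem_filter] at hR; exact Finset.erase_insert hR.2)
      (fun T hT => by simp only [mem_filter] at hT; exact Finset.insert_erase hT.2)
      (fun R hR => by
        simp only [mem_filter] at hR
        rw [Finset.erase_insert hR.2])
  rw [hre, ← Finset.sum_add_distrib]
  apply Finset.sum_congr rfl
  intro T hT
  simp only [mem_filter] at hT
  have huT : u ∈ T := hT.2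
  have h1 : ∏ i ∈ T, Function.update x u 1 i
      = ∏ i ∈ T.erase u, x i := by
    rw [Finset.prod_eq_mul_prod_sdiff_singleton_of_mem huT, Function.update_self, one_mul,
      ← Finset.erase_eq]
    apply Finset.prod_congr rfl
    intro i hi
    exact Function.update_of_ne (Finset.ne_of_mem_erase hi) _ _
  have h2 : ∏ i ∈ Tᶜ, (1 - Function.update x u 1 i) = ∏ i ∈ Tᶜ, (1 - x i) := by
    apply Finset.prod_congr rfl
    intro i hi
    rw [Function.update_of_ne (by intro h; subst h; exact (mem_compl.mp hi) huT) _ _]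
  have h3 : (∏ i ∈ T, x i) = x u * ∏ i ∈ T.erase u, x i := by
    rw [Finset.prod_eq_mul_prod_sdiff_singleton_of_mem huT, ← Finset.erase_eq]
  have h4 : ∏ i ∈ (T.erase u)ᶜ, (1 - x i) = (1 - x u) * ∏ i ∈ Tᶜ, (1 - x i) := by
    rw [compl_erase, Finset.prod_insert (by simp [huT])]
  rw [Finset.insert_eq_self.mpr huT]
  simp only [mlw, h1, h2, h3, h4]
  ring

private lemma mlext_update_zero (f : Finset α → ℝ) (x : α → ℝ) (u : α) :
    mlext f (Function.update x u 0) = ∑ R : Finset α, mlw x R * f (R.erase u) := by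
  rw [mlext_eq,
    ← Finset.sum_filter_add_sum_filter_not univ (fun T => u ∈ T)
      (fun T => mlw (Function.update x u 0) T * f T),
    ← Finset.sum_filter_add_sum_filter_not univ (fun R => u ∈ R)
      (fun R => mlw x R * f (R.erase u))]
  have hz : ∑ T ∈ univ.filter (fun T => u ∈ T),
      mlw (Function.update x u 0) T * f T = 0 := by
    apply Finset.sum_eq_zero
    intro T hT
    simp only [mem_filter] at hT
    have : ∏ i ∈ T, Function.update x u 0 i = 0 := by
      apply Finset.prod_eq_zero hT.2
      simp
    simp [mlw, this]
  rw [hz, zero_add]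
  have hre : ∑ R ∈ univ.filter (fun R => u ∈ R), mlw x R * f (R.erase u)
      = ∑ T ∈ univ.filter (fun T => u ∉ T), mlw x (insert u T) * f T := by
    refine Finset.sum_bij' (fun R _ => R.erase u) (fun T _ => insert u T)
      (fun R hR => by simp only [mem_filter] at hR ⊢; exact ⟨mem_univ _, Finset.notMem_erase u R⟩)
      (fun T hT => by simp only [mem_filter] at hT ⊢; exact ⟨mem_univ _, Finset.mem_insert_self u T⟩)
      (fun R hR => by simp only [mem_filter] at hR; exact Finset.insert_erase hR.2)
      (fun T hT => by simp only [mem_filter] at hT; exact Finset.erase_insert hT.2)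
      (fun R hR => by
        simp only [mem_filter] at hR
        rw [Finset.insert_erase hR.2])
  rw [hre, ← Finset.sum_add_distrib]
  apply Finset.sum_congr rfl
  intro T hT
  simp only [mem_filter] at hT
  have huT : u ∉ T := hT.2
  have huTc : u ∈ Tᶜ := Finset.mem_compl.mpr huT
  have h1 : ∏ i ∈ T, Function.update x u 0 i = ∏ i ∈ T, x i := by
    apply Finset.prod_congr rfl
    intro i hi
    exact Function.update_of_ne (by intro h; subst h; exact huT hi) _ _
  have h2 : ∏ i ∈ Tᶜ, (1 - Function.update x u 0 i)
      = ∏ i ∈ Tᶜ.erase u, (1 - x i) := by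
    rw [Finset.prod_eq_mul_prod_sdiff_singleton_of_mem huTc, Function.update_self, sub_zero, one_mul,
      ← Finset.erase_eq]
    apply Finset.prod_congr rfl
    intro i hi
    rw [Function.update_of_ne (Finset.ne_of_mem_erase hi) _ _]
  have h3 : ∏ i ∈ Tᶜ, (1 - x i) = (1 - x u) * ∏ i ∈ Tᶜ.erase u, (1 - x i) := by
    rw [Finset.prod_eq_mul_prod_sdiff_singleton_of_mem huTc, ← Finset.erase_eq]
  have h4 : ∏ i ∈ insert u T, x i = x u * ∏ i ∈ T, x i := Finset.prod_insert huT
  have h5 : ∏ i ∈ (insert u T)ᶜ, (1 - x i) = ∏ i ∈ Tᶜ.erase u, (1 - x i) := by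
    rw [compl_insert]
  rw [Finset.erase_eq_of_notMem huT]
  simp only [mlw, h1, h2, h3, h4, h5]
  ring

private lemma marg (f : Finset α → ℝ)
    (hsub : ∀ S T : Finset α, S ⊆ T → ∀ u ∉ T,
      f (insert u T) - f T ≤ f (insert u S) - f S) :
    ∀ D R : Finset α, Disjoint D R →
      f (R ∪ D) ≤ f R + ∑ u ∈ D, (f (insert u R) - f R) := by
  intro D
  induction D using Finset.induction_on with
  | empty => intro R _; simp
  | @insert a D ha ih =>
    intro R hdis
    have hdis' : Disjoint D R := (Finset.disjoint_insert_left.mp hdis).2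
    have haR : a ∉ R := (Finset.disjoint_insert_left.mp hdis).1
    have haRD : a ∉ R ∪ D := by simp [haR, ha]
    have key : f (insert a (R ∪ D)) - f (R ∪ D) ≤ f (insert a R) - f R :=
      hsub R (R ∪ D) Finset.subset_union_left a haRD
    have h1 : R ∪ insert a D = insert a (R ∪ D) := by
      rw [Finset.union_insert]
    rw [h1, Finset.sum_insert ha]
    have := ih R hdis'
    linarith

private lemma perR (f : Finset α → ℝ)
    (hmono : ∀ S T : Finset α, S ⊆ T → f S ≤ f T)
    (hsub : ∀ S T : Finset α, S ⊆ T → ∀ u ∉ T,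
      f (insert u T) - f T ≤ f (insert u S) - f S)
    (S R : Finset α) :
    f S ≤ f R + ∑ u ∈ S, (f (insert u R) - f (R.erase u)) := by
  have h1 : f S ≤ f (R ∪ (S \ R)) := by
    apply hmono
    intro a ha
    simp only [Finset.mem_union, Finset.mem_sdiff]
    by_cases h : a ∈ R
    · exact Or.inl h
    · exact Or.inr ⟨ha, h⟩
  have h2 := marg f hsub (S \ R) R Finset.sdiff_disjoint
  have h3 : ∑ u ∈ S \ R, (f (insert u R) - f R)
      = ∑ u ∈ S \ R, (f (insert u R) - f (R.erase u)) := by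
    apply Finset.sum_congr rfl
    intro u hu
    rw [Finset.erase_eq_of_notMem (Finset.mem_sdiff.mp hu).2]
  have h4 : ∑ u ∈ S \ R, (f (insert u R) - f (R.erase u))
      ≤ ∑ u ∈ S, (f (insert u R) - f (R.erase u)) := by
    apply Finset.sum_le_sum_of_subset_of_nonneg (Finset.sdiff_subset)
    intro u _ _
    have : R.erase u ⊆ insert u R :=
      (Finset.erase_subset u R).trans (Finset.subset_insert u R)
    linarith [hmono _ _ this]
  linarith

end aux

theorem stmt_8 {α : Type*} [Fintype α] [DecidableEq α] (f : Finset α → ℝ)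
    (hmono : ∀ S T : Finset α, S ⊆ T → f S ≤ f T)
    (hsub : ∀ S T : Finset α, S ⊆ T → ∀ u ∉ T,
      f (insert u T) - f T ≤ f (insert u S) - f S)
    (h0 : 0 ≤ f ∅)
    (x : α → ℝ) (hx : ∀ j, x j ∈ Set.Icc (0 : ℝ) 1) (S : Finset α) :
    f S ≤ mlext f x +
      ∑ u ∈ S, (mlext f (Function.update x u 1) - mlext f (Function.update x u 0)) := by
  have hdiff : ∀ u ∈ S, mlext f (Function.update x u 1) - mlext f (Function.update x u 0)
      = ∑ R : Finset α, mlw x R * (f (insert u R) - f (R.erase u)) := by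
    intro u _
    rw [mlext_update_one, mlext_update_zero, ← Finset.sum_sub_distrib]
    apply Finset.sum_congr rfl
    intro R _
    ring
  rw [Finset.sum_congr rfl hdiff, mlext_eq, Finset.sum_comm, ← Finset.sum_add_distrib]
  have hrw : ∀ R : Finset α,
      mlw x R * f R + ∑ u ∈ S, mlw x R * (f (insert u R) - f (R.erase u))
      = mlw x R * (f R + ∑ u ∈ S, (f (insert u R) - f (R.erase u))) := by
    intro R
    rw [mul_add, Finset.mul_sum]
  rw [Finset.sum_congr rfl (fun R _ => hrw R)]
  calc f S = (∑ R : Finset α, mlw x R) * f S := by rw [sum_mlw, one_mul]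
    _ = ∑ R : Finset α, mlw x R * f S := by rw [Finset.sum_mul]
    _ ≤ _ := by
        apply Finset.sum_le_sum
        intro R _
        exact mul_le_mul_of_nonneg_left (perR f hmono hsub S R) (mlw_nonneg x hx R)
end

section
/- Let f : 2^U → ℝ be monotone and submodular with multilinear extension F. Then for every x ∈ [0,1]^U and S ⊆ U, f(S) ≤ F(x) + Σ_{u ∈ S} g_u(x), where g_u(x) := Σ_{T ⊆ U} (∏_{j∈T} x_j)(∏_{j∉T}(1−x_j)) · (f(T ∪ {u}) − f(T)) is the expected marginal gain of u under the product distribution with marginals x. -/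
open Finset

/-- The expected marginal gain of `u` under the product distribution with marginals `x`. -/
def expMarginal {α : Type*} [Fintype α] [DecidableEq α] (f : Finset α → ℝ)
    (u : α) (x : α → ℝ) : ℝ :=
  ∑ T : Finset α, (∏ j ∈ T, x j) * (∏ j ∈ Tᶜ, (1 - x j)) * (f (insert u T) - f T)

lemma aux_sub {α : Type*} [DecidableEq α] (f : Finset α → ℝ)
    (hmono : ∀ S T : Finset α, S ⊆ T → f S ≤ f T)
    (hsub : ∀ S T : Finset α, S ⊆ T → ∀ u ∉ T,
      f (insert u T) - f T ≤ f (insert u S) - f S)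
    (T : Finset α) (S : Finset α) :
    f (S ∪ T) - f T ≤ ∑ u ∈ S, (f (insert u T) - f T) := by
  induction S using Finset.induction with
  | empty => simp
  | @insert a S ha ih =>
    rw [Finset.sum_insert ha, Finset.insert_union]
    have h1 : f (insert a (S ∪ T)) - f (S ∪ T) ≤ f (insert a T) - f T := by
      by_cases haT : a ∈ T
      · have h2 : insert a (S ∪ T) = S ∪ T := by
          rw [Finset.insert_eq_self]; exact Finset.mem_union_right _ haT
        rw [h2]
        have := hmono T (insert a T) (Finset.subset_insert _ _)
        linarith
      · exact hsub T (S ∪ T) Finset.subset_union_right a (by simp [ha, haT])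
    linarith

theorem stmt_9 {α : Type*} [Fintype α] [DecidableEq α] (f : Finset α → ℝ)
    (hmono : ∀ S T : Finset α, S ⊆ T → f S ≤ f T)
    (hsub : ∀ S T : Finset α, S ⊆ T → ∀ u ∉ T,
      f (insert u T) - f T ≤ f (insert u S) - f S)
    (x : α → ℝ) (hx : ∀ j, x j ∈ Set.Icc (0 : ℝ) 1) (S : Finset α) :
    f S ≤ mlext f x + ∑ u ∈ S, expMarginal f u x := by
  set w : Finset α → ℝ := fun T => (∏ j ∈ T, x j) * (∏ j ∈ Tᶜ, (1 - x j)) with hw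
  have hwnn : ∀ T : Finset α, 0 ≤ w T := by
    intro T
    apply mul_nonneg
    · exact Finset.prod_nonneg fun j _ => (hx j).1
    · exact Finset.prod_nonneg fun j _ => by linarith [(hx j).2]
  have hwsum : ∑ T : Finset α, w T = 1 := by
    have := Finset.prod_add x (fun j => 1 - x j) (Finset.univ : Finset α)
    simp only [hw]
    rw [← Finset.powerset_univ]
    calc ∑ T ∈ (Finset.univ : Finset α).powerset, (∏ j ∈ T, x j) * ∏ j ∈ Tᶜ, (1 - x j)
        = ∑ T ∈ (Finset.univ : Finset α).powerset, (∏ j ∈ T, x j) * ∏ j ∈ univ \ T, (1 - x j) := by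
          apply Finset.sum_congr rfl; intro T _; rw [Finset.compl_eq_univ_sdiff]
      _ = ∏ j ∈ univ, (x j + (1 - x j)) := this.symm
      _ = 1 := by simp
  have key : ∀ T : Finset α, f S ≤ f T + ∑ u ∈ S, (f (insert u T) - f T) := by
    intro T
    have h1 : f S ≤ f (S ∪ T) := hmono _ _ Finset.subset_union_left
    have h2 := aux_sub f hmono hsub T S
    linarith
  calc f S = ∑ T : Finset α, w T * f S := by
        rw [← Finset.sum_mul, hwsum, one_mul]
    _ ≤ ∑ T : Finset α, w T * (f T + ∑ u ∈ S, (f (insert u T) - f T)) := by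
        apply Finset.sum_le_sum
        intro T _
        exact mul_le_mul_of_nonneg_left (key T) (hwnn T)
    _ = ∑ T : Finset α, w T * f T + ∑ T : Finset α, ∑ u ∈ S, w T * (f (insert u T) - f T) := by
        rw [← Finset.sum_add_distrib]
        apply Finset.sum_congr rfl
        intro T _
        rw [mul_add, Finset.mul_sum]
    _ = mlext f x + ∑ u ∈ S, expMarginal f u x := by
        rw [Finset.sum_comm]
        rfl
end

section
/- Let f : 2^U → ℝ be submodular with multilinear extension F. For any y ∈ [0,1]^U and distinct i, j ∈ U, the function t ↦ F(y + t(e_i − e_j)) is convex on the interval of t for which y + t(e_i − e_j) ∈ [0,1]^U. -/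
open Finset

private lemma quad_convexOn {s : Set ℝ} (hs : Convex ℝ s) {A B C : ℝ} (hA : 0 ≤ A) :
    ConvexOn ℝ s (fun t => A * t ^ 2 + B * t + C) := by
  refine ⟨hs, fun x _ y _ a b ha hb hab => ?_⟩
  simp only [smul_eq_mul]
  have key : a * (A * x ^ 2 + B * x + C) + b * (A * y ^ 2 + B * y + C) -
      (A * (a * x + b * y) ^ 2 + B * (a * x + b * y) + C) = A * a * b * (x - y) ^ 2 := by
    have hb' : b = 1 - a := by linarith
    rw [hb']; ring
  have nn : (0:ℝ) ≤ A * a * b * (x - y) ^ 2 :=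
    mul_nonneg (mul_nonneg (mul_nonneg hA ha) hb) (sq_nonneg (x - y))
  linarith [key, nn]

private lemma mlext_expand {α : Type*} [Fintype α] [DecidableEq α] (f : Finset α → ℝ)
    (x : α → ℝ) (i j : α) (hij : i ≠ j) :
    mlext f x = ∑ T ∈ (((univ : Finset α).erase j).erase i).powerset,
      (∏ k ∈ T, x k) * (∏ k ∈ (Tᶜ.erase i).erase j, (1 - x k)) *
      ((1 - x i) * (1 - x j) * f T + x i * (1 - x j) * f (insert i T)
        + (1 - x i) * x j * f (insert j T) + x i * x j * f (insert j (insert i T))) := by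
  classical
  have hji : j ≠ i := hij.symm
  have h1 : insert i (((univ : Finset α).erase j).erase i) = (univ : Finset α).erase j :=
    Finset.insert_erase (Finset.mem_erase.2 ⟨hij, mem_univ i⟩)
  have h2 : insert j ((univ : Finset α).erase j) = (univ : Finset α) :=
    Finset.insert_erase (mem_univ j)
  have h3 : (univ : Finset (Finset α)) =
      (insert j (insert i (((univ : Finset α).erase j).erase i))).powerset := by
    rw [h1, h2, Finset.powerset_univ]
  have hi0 : i ∉ ((univ : Finset α).erase j).erase i := Finset.notMem_erase _ _
  have hj0 : j ∉ insert i (((univ : Finset α).erase j).erase i) := by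
    rw [h1]; exact Finset.notMem_erase _ _
  unfold mlext
  rw [h3, Finset.sum_powerset_insert hj0, Finset.sum_powerset_insert hi0,
    Finset.sum_powerset_insert hi0, ← Finset.sum_add_distrib, ← Finset.sum_add_distrib,
    ← Finset.sum_add_distrib]
  refine Finset.sum_congr rfl fun T hT => ?_
  have hTs := Finset.mem_powerset.1 hT
  have hiT : i ∉ T := fun h => hi0 (hTs h)
  have hjT : j ∉ T := fun h => (Finset.notMem_erase j _) (Finset.mem_of_mem_erase (hTs h))
  have hiTc : i ∈ Tᶜ := Finset.mem_compl.2 hiT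
  have hjTc' : j ∈ Tᶜ.erase i := Finset.mem_erase.2 ⟨hji, Finset.mem_compl.2 hjT⟩
  have hiTcj : i ∈ Tᶜ.erase j := Finset.mem_erase.2 ⟨hij, hiTc⟩
  have hjR : j ∉ (Tᶜ.erase i).erase j := Finset.notMem_erase _ _
  have hiR : i ∉ (Tᶜ.erase i).erase j := fun h =>
    (Finset.notMem_erase i _) (Finset.mem_of_mem_erase h)
  have hijR : i ∉ insert j ((Tᶜ.erase i).erase j) := by
    simp only [Finset.mem_insert, not_or]; exact ⟨hij, hiR⟩
  have hjiT : j ∉ insert i T := by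
    simp only [Finset.mem_insert, not_or]; exact ⟨hji, hjT⟩
  have e1 : Tᶜ = insert i (insert j ((Tᶜ.erase i).erase j)) := by
    rw [Finset.insert_erase hjTc', Finset.insert_erase hiTc]
  have e2 : (insert i T)ᶜ = insert j ((Tᶜ.erase i).erase j) := by
    rw [Finset.compl_insert, Finset.insert_erase hjTc']
  have e3 : (insert j T)ᶜ = insert i ((Tᶜ.erase i).erase j) := by
    rw [Finset.compl_insert, Finset.erase_right_comm, Finset.insert_erase hiTcj]
  have e4 : (insert j (insert i T))ᶜ = (Tᶜ.erase i).erase j := by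
    rw [Finset.compl_insert, Finset.compl_insert]
  have q1 : ∏ k ∈ Tᶜ, (1 - x k) =
      (1 - x i) * ((1 - x j) * ∏ k ∈ (Tᶜ.erase i).erase j, (1 - x k)) := by
    conv_lhs => rw [e1]
    rw [Finset.prod_insert hijR, Finset.prod_insert hjR]
  rw [Finset.prod_insert hjiT, Finset.prod_insert hiT, Finset.prod_insert hjT,
    q1, e2, e3, e4, Finset.prod_insert hjR, Finset.prod_insert hiR]
  ring

theorem stmt_10 {α : Type*} [Fintype α] [DecidableEq α] (f : Finset α → ℝ)
    (hsub : ∀ S T : Finset α, S ⊆ T → ∀ u ∉ T,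
      f (insert u T) - f T ≤ f (insert u S) - f S)
    (y : α → ℝ) (hy : ∀ k, y k ∈ Set.Icc (0 : ℝ) 1) (i j : α) (hij : i ≠ j) :
    ConvexOn ℝ
      {t : ℝ | ∀ k, y k + t * ((if k = i then (1 : ℝ) else 0) -
          (if k = j then (1 : ℝ) else 0)) ∈ Set.Icc (0 : ℝ) 1}
      (fun t => mlext f (fun k => y k + t * ((if k = i then (1 : ℝ) else 0) -
          (if k = j then (1 : ℝ) else 0)))) := by
  classical
  have hji : j ≠ i := hij.symm
  -- convexity of the domain
  have hdom : Convex ℝ {t : ℝ | ∀ k, y k + t * ((if k = i then (1 : ℝ) else 0) -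
      (if k = j then (1 : ℝ) else 0)) ∈ Set.Icc (0 : ℝ) 1} := by
    intro t₁ h₁ t₂ h₂ a b ha hb hab
    intro k
    have p := h₁ k
    have q := h₂ k
    simp only [Set.mem_Icc, smul_eq_mul] at *
    set c : ℝ := (if k = i then (1 : ℝ) else 0) - (if k = j then (1 : ℝ) else 0) with hc
    have e : y k + (a * t₁ + b * t₂) * c =
        a * (y k + t₁ * c) + b * (y k + t₂ * c) := by
      have hb' : b = 1 - a := by linarith
      rw [hb']; ring
    constructor
    · rw [e]; exact add_nonneg (mul_nonneg ha p.1) (mul_nonneg hb q.1)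
    · rw [e]; nlinarith [mul_nonneg ha (by linarith [p.2] : (0:ℝ) ≤ 1 - (y k + t₁ * c)),
        mul_nonneg hb (by linarith [q.2] : (0:ℝ) ≤ 1 - (y k + t₂ * c))]
  set AA : ℝ := ∑ T ∈ (((univ : Finset α).erase j).erase i).powerset,
      (∏ k ∈ T, y k) * (∏ k ∈ (Tᶜ.erase i).erase j, (1 - y k)) *
      (f (insert i T) + f (insert j T) - f (insert j (insert i T)) - f T) with hAA
  set BB : ℝ := ∑ T ∈ (((univ : Finset α).erase j).erase i).powerset,
      (∏ k ∈ T, y k) * (∏ k ∈ (Tᶜ.erase i).erase j, (1 - y k)) *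
      ((y j - y i) * f T + (y i + 1 - y j) * f (insert i T)
        + (y i - 1 - y j) * f (insert j T) + (y j - y i) * f (insert j (insert i T))) with hBB
  set CC : ℝ := ∑ T ∈ (((univ : Finset α).erase j).erase i).powerset,
      (∏ k ∈ T, y k) * (∏ k ∈ (Tᶜ.erase i).erase j, (1 - y k)) *
      ((1 - y i) * (1 - y j) * f T + y i * (1 - y j) * f (insert i T)
        + (1 - y i) * y j * f (insert j T) + y i * y j * f (insert j (insert i T))) with hCC
  have key : ∀ t : ℝ, mlext f (fun k => y k + t * ((if k = i then (1 : ℝ) else 0) -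
      (if k = j then (1 : ℝ) else 0))) = AA * t ^ 2 + BB * t + CC := by
    intro t
    rw [mlext_expand f _ i j hij, hAA, hBB, hCC, Finset.sum_mul, Finset.sum_mul,
      ← Finset.sum_add_distrib, ← Finset.sum_add_distrib]
    refine Finset.sum_congr rfl fun T hT => ?_
    have hTs := Finset.mem_powerset.1 hT
    have hiT : i ∉ T := fun h => (Finset.notMem_erase i _) (hTs h)
    have hjT : j ∉ T := fun h =>
      (Finset.notMem_erase j _) (Finset.mem_of_mem_erase (hTs h))
    have hP : ∏ k ∈ T, (y k + t * ((if k = i then (1 : ℝ) else 0) -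
        (if k = j then (1 : ℝ) else 0))) = ∏ k ∈ T, y k := by
      refine Finset.prod_congr rfl fun k hk => ?_
      have hki : k ≠ i := fun h => hiT (h ▸ hk)
      have hkj : k ≠ j := fun h => hjT (h ▸ hk)
      simp [hki, hkj]
    have hQ : ∏ k ∈ (Tᶜ.erase i).erase j, (1 - (y k + t * ((if k = i then (1 : ℝ) else 0) -
        (if k = j then (1 : ℝ) else 0)))) = ∏ k ∈ (Tᶜ.erase i).erase j, (1 - y k) := by
      refine Finset.prod_congr rfl fun k hk => ?_
      have hkj : k ≠ j := (Finset.mem_erase.1 hk).1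
      have hki : k ≠ i := (Finset.mem_erase.1 (Finset.mem_of_mem_erase hk)).1
      simp [hki, hkj]
    simp only [hP, hQ, if_neg hij, if_neg hji, eq_self_iff_true, if_true]
    ring
  have hA : 0 ≤ AA := by
    rw [hAA]
    refine Finset.sum_nonneg fun T hT => ?_
    have hTs := Finset.mem_powerset.1 hT
    have hiT : i ∉ T := fun h => (Finset.notMem_erase i _) (hTs h)
    have hjT : j ∉ T := fun h =>
      (Finset.notMem_erase j _) (Finset.mem_of_mem_erase (hTs h))
    have hjiT : j ∉ insert i T := by
      simp only [Finset.mem_insert, not_or]; exact ⟨hji, hjT⟩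
    have hs := hsub T (insert i T) (Finset.subset_insert _ _) j hjiT
    have hnn : (0:ℝ) ≤ (∏ k ∈ T, y k) * ∏ k ∈ (Tᶜ.erase i).erase j, (1 - y k) := by
      apply mul_nonneg
      · exact Finset.prod_nonneg fun k _ => (hy k).1
      · exact Finset.prod_nonneg fun k _ => by linarith [(hy k).2]
    have : (0:ℝ) ≤ f (insert i T) + f (insert j T) - f (insert j (insert i T)) - f T := by
      linarith
    exact mul_nonneg hnn this
  have funeq : (fun t => mlext f (fun k => y k + t * ((if k = i then (1 : ℝ) else 0) -
      (if k = j then (1 : ℝ) else 0)))) = fun t => AA * t ^ 2 + BB * t + CC :=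
    funext key
  rw [funeq]
  exact quad_convexOn hdom hA
end

section
/- Let f : 2^U → ℝ be submodular with multilinear extension F, let y ∈ [0,1]^U, and let i ≠ j in U. If the discrete derivative of F at y in coordinate i is at least that in coordinate j, i.e., F(y[i↦1]) − F(y[i↦0]) ≥ F(y[j↦1]) − F(y[j↦0]), then for every t ≥ 0 with y + t(e_i − e_j) ∈ [0,1]^U we have F(y + t(e_i − e_j)) ≥ F(y). -/
open Finset

lemma prod_update_notmem {α : Type*} [DecidableEq α] (x : α → ℝ) (i : α) (a : ℝ)
    {S : Finset α} (h : i ∉ S) :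
    ∏ k ∈ S, Function.update x i a k = ∏ k ∈ S, x k :=
  Finset.prod_congr rfl fun k hk => Function.update_of_ne (ne_of_mem_of_not_mem hk h) a x

lemma prod_update_split {α : Type*} [DecidableEq α] (x : α → ℝ) {i j : α} (hij : i ≠ j)
    (a b : ℝ) (S : Finset α) :
    (∏ k ∈ S, Function.update (Function.update x i a) j b k)
      = (if i ∈ S then a else 1) * (if j ∈ S then b else 1) *
        ∏ k ∈ (S.erase i).erase j, x k := by
  by_cases hjS : j ∈ S <;> by_cases hiS : i ∈ S
  · rw [Finset.prod_update_of_mem hjS]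
    simp only [← Finset.erase_eq]
    rw [Finset.prod_update_of_mem (Finset.mem_erase.2 ⟨hij, hiS⟩)]
    simp only [← Finset.erase_eq]
    rw [Finset.erase_right_comm, if_pos hiS, if_pos hjS]
    ring
  · rw [Finset.prod_update_of_mem hjS]
    simp only [← Finset.erase_eq]
    rw [prod_update_notmem x i a (fun h => hiS (Finset.mem_of_mem_erase h)),
      Finset.erase_eq_of_notMem hiS, if_neg hiS, if_pos hjS]
    ring
  · rw [prod_update_notmem _ j b hjS, Finset.prod_update_of_mem hiS]
    simp only [← Finset.erase_eq]
    rw [Finset.erase_eq_of_notMem (fun h => hjS (Finset.mem_of_mem_erase h)), if_pos hiS, if_neg hjS]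
    ring
  · rw [prod_update_notmem _ j b hjS, prod_update_notmem x i a hiS,
      Finset.erase_eq_of_notMem hiS, Finset.erase_eq_of_notMem hjS, if_neg hiS, if_neg hjS]
    ring

lemma one_sub_update2 {α : Type*} [DecidableEq α] (x : α → ℝ) (i j : α) (a b : ℝ) (k : α) :
    1 - Function.update (Function.update x i a) j b k
      = Function.update (Function.update (fun k => 1 - x k) i (1 - a)) j (1 - b) k := by
  rcases eq_or_ne k j with rfl | hkj
  · simp
  · rcases eq_or_ne k i with rfl | hki
    · simp [Function.update_of_ne hkj]
    · simp [Function.update_of_ne hkj, Function.update_of_ne hki]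

lemma prod_one_sub_update_split {α : Type*} [DecidableEq α] (x : α → ℝ) {i j : α} (hij : i ≠ j)
    (a b : ℝ) (S : Finset α) :
    (∏ k ∈ S, (1 - Function.update (Function.update x i a) j b k))
      = (if i ∈ S then 1 - a else 1) * (if j ∈ S then 1 - b else 1) *
        ∏ k ∈ (S.erase i).erase j, (1 - x k) := by
  rw [Finset.prod_congr rfl fun k _ => one_sub_update2 x i j a b k,
    prod_update_split _ hij (1 - a) (1 - b) S]

lemma mlext_master {α : Type*} [Fintype α] [DecidableEq α] (f : Finset α → ℝ) (y : α → ℝ)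
    {i j : α} (hij : i ≠ j) (a b : ℝ) :
    mlext f (Function.update (Function.update y i a) j b)
      = (1-a)*(1-b) * (∑ T ∈ (((Finset.univ : Finset α).erase j).erase i).powerset,
            ((∏ k ∈ T, y k) * ∏ k ∈ (Tᶜ.erase i).erase j, (1 - y k)) * f T)
        + a*(1-b) * (∑ T ∈ (((Finset.univ : Finset α).erase j).erase i).powerset,
            ((∏ k ∈ T, y k) * ∏ k ∈ (Tᶜ.erase i).erase j, (1 - y k)) * f (insert i T))
        + (1-a)*b * (∑ T ∈ (((Finset.univ : Finset α).erase j).erase i).powerset,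
            ((∏ k ∈ T, y k) * ∏ k ∈ (Tᶜ.erase i).erase j, (1 - y k)) * f (insert j T))
        + a*b * (∑ T ∈ (((Finset.univ : Finset α).erase j).erase i).powerset,
            ((∏ k ∈ T, y k) * ∏ k ∈ (Tᶜ.erase i).erase j, (1 - y k)) * f (insert j (insert i T))) := by
  classical
  set B := ((Finset.univ : Finset α).erase j).erase i with hB
  have hiB : i ∉ B := Finset.notMem_erase _ _
  have hjB : j ∉ insert i B := by
    simp [hB, Finset.mem_insert, hij.symm, Finset.mem_erase]
  have huniv : (Finset.univ : Finset α) = insert j (insert i B) := by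
    rw [hB, Finset.insert_erase (Finset.mem_erase.2 ⟨hij, Finset.mem_univ i⟩),
      Finset.insert_erase (Finset.mem_univ j)]
  unfold mlext
  rw [← Finset.powerset_univ, huniv, Finset.sum_powerset_insert hjB,
    Finset.sum_powerset_insert hiB, Finset.sum_powerset_insert hiB,
    Finset.mul_sum, Finset.mul_sum, Finset.mul_sum, Finset.mul_sum]
  simp only [← Finset.sum_add_distrib]
  refine Finset.sum_congr rfl fun T hT => ?_
  have hTB : T ⊆ B := Finset.mem_powerset.1 hT
  have hiT : i ∉ T := fun h => hiB (hTB h)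
  have hjT : j ∉ T := fun h => by
    have := hTB h
    rw [hB] at this
    exact (Finset.mem_erase.1 (Finset.mem_of_mem_erase this)).1 rfl
  have hjiT : j ∉ insert i T := by
    simp [Finset.mem_insert, hij.symm, hjT]
  -- set identities
  have s1 : (T.erase i).erase j = T := by
    rw [Finset.erase_eq_of_notMem hiT, Finset.erase_eq_of_notMem hjT]
  have s3 : ((insert i T).erase i).erase j = T := by
    rw [Finset.erase_insert hiT, Finset.erase_eq_of_notMem hjT]
  have s4 : ((insert i T)ᶜ.erase i).erase j = (Tᶜ.erase i).erase j := by
    rw [Finset.compl_insert, Finset.erase_idem]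
  have s5 : ((insert j T).erase i).erase j = T := by
    rw [Finset.erase_insert_of_ne (Ne.symm hij), Finset.erase_eq_of_notMem hiT,
      Finset.erase_insert hjT]
  have s6 : ((insert j T)ᶜ.erase i).erase j = (Tᶜ.erase i).erase j := by
    rw [Finset.compl_insert, Finset.erase_right_comm, Finset.erase_idem,
      Finset.erase_right_comm]
  have s7 : ((insert j (insert i T)).erase i).erase j = T := by
    rw [Finset.erase_insert_of_ne (Ne.symm hij), Finset.erase_insert hiT, Finset.erase_insert hjT]
  have s8 : ((insert j (insert i T))ᶜ.erase i).erase j = (Tᶜ.erase i).erase j := by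
    rw [Finset.compl_insert, Finset.compl_insert]
    conv_lhs => rw [Finset.erase_right_comm, Finset.erase_idem, Finset.erase_right_comm,
      Finset.erase_idem]
  rw [prod_update_split y hij a b T, prod_one_sub_update_split y hij a b Tᶜ,
    prod_update_split y hij a b (insert i T), prod_one_sub_update_split y hij a b (insert i T)ᶜ,
    prod_update_split y hij a b (insert j T), prod_one_sub_update_split y hij a b (insert j T)ᶜ,
    prod_update_split y hij a b (insert j (insert i T)),
    prod_one_sub_update_split y hij a b (insert j (insert i T))ᶜ,
    s1, s3, s4, s5, s6, s7, s8]
  simp only [Finset.mem_compl, Finset.mem_insert, hiT, hjT, if_neg, if_pos,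
    Finset.mem_erase, not_false_iff, eq_self_iff_true, hij, Ne.symm hij]
  simp [hiT, hjT, hij, Ne.symm hij]
  ring

theorem stmt_11 {α : Type*} [Fintype α] [DecidableEq α] (f : Finset α → ℝ)
    (hsub : ∀ S T : Finset α, S ⊆ T → ∀ u ∉ T,
      f (insert u T) - f T ≤ f (insert u S) - f S)
    (y : α → ℝ) (hy : ∀ k, y k ∈ Set.Icc (0 : ℝ) 1) (i j : α) (hij : i ≠ j)
    (hderiv : mlext f (Function.update y j 1) - mlext f (Function.update y j 0) ≤
        mlext f (Function.update y i 1) - mlext f (Function.update y i 0))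
    (t : ℝ) (ht : 0 ≤ t)
    (ht' : ∀ k, y k + t * ((if k = i then (1 : ℝ) else 0) -
        (if k = j then (1 : ℝ) else 0)) ∈ Set.Icc (0 : ℝ) 1) :
    mlext f y ≤
      mlext f (fun k => y k + t * ((if k = i then (1 : ℝ) else 0) -
        (if k = j then (1 : ℝ) else 0))) := by
  classical
  have M := mlext_master f y hij
  set SA := ∑ T ∈ (((Finset.univ : Finset α).erase j).erase i).powerset,
      ((∏ k ∈ T, y k) * ∏ k ∈ (Tᶜ.erase i).erase j, (1 - y k)) * f T with hSA
  set SI := ∑ T ∈ (((Finset.univ : Finset α).erase j).erase i).powerset,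
      ((∏ k ∈ T, y k) * ∏ k ∈ (Tᶜ.erase i).erase j, (1 - y k)) * f (insert i T) with hSI
  set SJ := ∑ T ∈ (((Finset.univ : Finset α).erase j).erase i).powerset,
      ((∏ k ∈ T, y k) * ∏ k ∈ (Tᶜ.erase i).erase j, (1 - y k)) * f (insert j T) with hSJ
  set SC := ∑ T ∈ (((Finset.univ : Finset α).erase j).erase i).powerset,
      ((∏ k ∈ T, y k) * ∏ k ∈ (Tᶜ.erase i).erase j, (1 - y k)) * f (insert j (insert i T)) with hSC
  -- submodularity: SC + SA ≤ SJ + SI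
  have hD : SC + SA ≤ SJ + SI := by
    rw [hSC, hSA, hSJ, hSI, ← Finset.sum_add_distrib, ← Finset.sum_add_distrib]
    refine Finset.sum_le_sum fun T hT => ?_
    have hTB := Finset.mem_powerset.1 hT
    have hiT : i ∉ T := fun h => Finset.notMem_erase i _ (hTB h)
    have hjT : j ∉ T := fun h =>
      (Finset.mem_erase.1 (Finset.mem_of_mem_erase (hTB h))).1 rfl
    have hQ : 0 ≤ (∏ k ∈ T, y k) * ∏ k ∈ (Tᶜ.erase i).erase j, (1 - y k) :=
      mul_nonneg (Finset.prod_nonneg fun k _ => (hy k).1)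
        (Finset.prod_nonneg fun k _ => by linarith [(hy k).2])
    have hiJT : i ∉ insert j T := by
      simp [Finset.mem_insert, hij, hiT]
    have hs := hsub T (insert j T) (Finset.subset_insert _ _) i hiJT
    rw [Finset.insert_comm] at hs
    have h1 : f (insert j (insert i T)) + f T ≤ f (insert j T) + f (insert i T) := by
      linarith
    have h2 := mul_le_mul_of_nonneg_left h1 hQ
    rw [mul_add, mul_add] at h2
    linarith
  -- rewrite all mlext values through the master expansion
  have e0 : Function.update (Function.update y i (y i)) j (y j) = y := by
    rw [Function.update_eq_self, Function.update_eq_self]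
  have h00 : mlext f y = (1 - y i) * (1 - y j) * SA + y i * (1 - y j) * SI
      + (1 - y i) * y j * SJ + y i * y j * SC := by
    conv_lhs => rw [← e0]
    exact M (y i) (y j)
  have ei1 : Function.update (Function.update y i 1) j (y j) = Function.update y i 1 := by
    rw [show y j = (Function.update y i 1) j from
      (Function.update_of_ne (Ne.symm hij) _ _).symm, Function.update_eq_self]
  have ei0 : Function.update (Function.update y i 0) j (y j) = Function.update y i 0 := by
    rw [show y j = (Function.update y i 0) j from
      (Function.update_of_ne (Ne.symm hij) _ _).symm, Function.update_eq_self]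
  have hi1 : mlext f (Function.update y i 1) = (1 - 1) * (1 - y j) * SA
      + 1 * (1 - y j) * SI + (1 - 1) * y j * SJ + 1 * y j * SC := by
    conv_lhs => rw [← ei1]
    exact M 1 (y j)
  have hi0 : mlext f (Function.update y i 0) = (1 - 0) * (1 - y j) * SA
      + 0 * (1 - y j) * SI + (1 - 0) * y j * SJ + 0 * y j * SC := by
    conv_lhs => rw [← ei0]
    exact M 0 (y j)
  have ej : ∀ b : ℝ, Function.update (Function.update y i (y i)) j b =
      Function.update y j b := by
    intro b; rw [Function.update_eq_self]
  have hj1 : mlext f (Function.update y j 1) = (1 - y i) * (1 - 1) * SA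
      + y i * (1 - 1) * SI + (1 - y i) * 1 * SJ + y i * 1 * SC := by
    conv_lhs => rw [← ej 1]
    exact M (y i) 1
  have hj0 : mlext f (Function.update y j 0) = (1 - y i) * (1 - 0) * SA
      + y i * (1 - 0) * SI + (1 - y i) * 0 * SJ + y i * 0 * SC := by
    conv_lhs => rw [← ej 0]
    exact M (y i) 0
  have ez : (fun k => y k + t * ((if k = i then (1 : ℝ) else 0) -
      (if k = j then (1 : ℝ) else 0)))
      = Function.update (Function.update y i (y i + t)) j (y j - t) := by
    funext k
    rcases eq_or_ne k j with rfl | hkj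
    · rw [Function.update_self, if_neg (Ne.symm hij), if_pos rfl]
      ring
    · rw [Function.update_of_ne hkj]
      rcases eq_or_ne k i with rfl | hki
      · rw [Function.update_self, if_pos rfl, if_neg (fun h => hkj h)]
        ring
      · rw [Function.update_of_ne hki, if_neg hki, if_neg hkj]
        ring
  have hzz : mlext f (fun k => y k + t * ((if k = i then (1 : ℝ) else 0) -
      (if k = j then (1 : ℝ) else 0)))
      = (1 - (y i + t)) * (1 - (y j - t)) * SA + (y i + t) * (1 - (y j - t)) * SI
        + (1 - (y i + t)) * (y j - t) * SJ + (y i + t) * (y j - t) * SC := by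
    rw [ez]
    exact M (y i + t) (y j - t)
  rw [h00, hzz]
  rw [hj1, hj0, hi1, hi0] at hderiv
  have k1 : 0 ≤ t * ((SI + (y j) * (SC - SI - SJ + SA)) -
      (SJ + (y i) * (SC - SI - SJ + SA))) :=
    mul_nonneg ht (by nlinarith [hderiv])
  have k2 : 0 ≤ t * t * (SJ + SI - SC - SA) :=
    mul_nonneg (mul_nonneg ht ht) (by linarith)
  nlinarith [k1, k2]
end

section
/- Let M be a matroid on a finite ground set with bases B₁ and B₂. Then there exists a bijection φ : B₁ → B₂ such that for every u ∈ B₁, the set (B₁ \ {u}) ∪ {φ(u)} is a base of M (Brualdi's exchange bijection). -/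
/-! By Hall's marriage theorem it suffices that every `A ⊆ B₁` has at least `|A|` exchange
partners in `B₂`. Extend `B₁ \ A` by elements of `B₂` to a base `B`; this adds exactly `|A|`
elements `v`. Such a `v` either lies in `A` (and is its own partner) or lies outside `B₁`, in
which case the fundamental circuit of `v` in `B₁` must meet `A`, because `insert v (B₁ \ A)` is
independent; every element of that circuit can be exchanged for `v`. -/

open Set

theorem Set.exists_equiv_forall_rel_of_hall {α β : Type*} {S : Set α} {T : Set β}
    (hS : S.Finite) (hT : T.Finite) (hcard : T.ncard ≤ S.ncard) (r : α → β → Prop)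
    (hall : ∀ A ⊆ S, A.ncard ≤ {v ∈ T | ∃ u ∈ A, r u v}.ncard) :
    ∃ φ : S ≃ T, ∀ u : S, r u (φ u) := by
  classical
  have := hS.fintype
  have := hT.fintype
  obtain ⟨f, hf_inj, hf_rel⟩ :=
    (Fintype.all_card_le_filter_rel_iff_exists_injective (fun (u : S) (v : T) ↦ r u v)).mp
      fun A ↦ by
        have key := hall (Subtype.val '' (A : Set S)) (by simp)
        rw [ncard_image_of_injective _ Subtype.val_injective, ncard_coe_finset] at key
        refine key.trans_eq ?_
        rw [← ncard_coe_finset, ← ncard_image_of_injective _ Subtype.val_injective]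
        congr 1
        ext v
        simp [and_comm]
  have hbij : f.Bijective := hf_inj.bijective_of_nat_card_le <| by
    rwa [Nat.card_coe_set_eq, Nat.card_coe_set_eq]
  exact ⟨.ofBijective f hbij, hf_rel⟩

namespace Matroid

variable {α : Type*} {M : Matroid α} {B B₁ B₂ A : Set α} {v : α}

lemma IsBase.exists_mem_isBase_insert_sdiff_singleton (hB : M.IsBase B) (hvB : v ∉ B)
    (hI : M.Indep (insert v (B \ A))) : ∃ u ∈ A, M.IsBase (insert v (B \ {u})) := by
  have hC := hB.fundCircuit_isCircuit (hI.subset_ground (mem_insert v _)) hvB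
  obtain ⟨u, huC, huI⟩ := not_subset.mp fun h ↦ hC.not_indep (hI.subset h)
  have hvu : v ≠ u := by rintro rfl; exact huI (mem_insert v _)
  have huB : u ∈ B := (M.fundCircuit_subset_insert v B huC).resolve_left hvu.symm
  have hvcl : v ∈ M.closure B := by
    rw [hB.closure_eq]; exact hC.subset_ground (M.mem_fundCircuit v B)
  have hexch := (hB.indep.mem_fundCircuit_iff hvcl hvB).mp huC
  rw [← insert_sdiff_singleton_comm hvu] at hexch
  exact ⟨u, by_contra fun huA ↦ huI (.inr ⟨huB, huA⟩), hB.exchange_isBase_of_indep hvB hexch⟩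

lemma IsBase.ncard_le_ncard_exchangeable [M.RankFinite] (h₁ : M.IsBase B₁) (h₂ : M.IsBase B₂)
    (hA : A ⊆ B₁) :
    A.ncard ≤ {v ∈ B₂ | ∃ u ∈ A, M.IsBase (insert v (B₁ \ {u}))}.ncard := by
  obtain ⟨B, hB, hIB, hBI⟩ :=
    (h₁.indep.subset (sdiff_subset (t := A))).exists_isBase_subset_union_isBase h₂
  have hcard : (B \ (B₁ \ A)).ncard = A.ncard := by
    have h₁A := ncard_sdiff_add_ncard_of_subset hA h₁.finite
    have hB_I := ncard_sdiff_add_ncard_of_subset hIB hB.finite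
    have := hB.ncard_eq_ncard_of_isBase h₁
    omega
  refine hcard.symm.le.trans (ncard_le_ncard ?_ (h₂.finite.subset fun v hv ↦ hv.1))
  rintro v ⟨hvB, hvI⟩
  have hvB₂ : v ∈ B₂ := (hBI hvB).resolve_left hvI
  refine ⟨hvB₂, ?_⟩
  by_cases hvB₁ : v ∈ B₁
  · have hvA : v ∈ A := by_contra fun hvA ↦ hvI ⟨hvB₁, hvA⟩
    exact ⟨v, hvA, by rwa [insert_sdiff_singleton, insert_eq_of_mem hvB₁]⟩
  · exact h₁.exists_mem_isBase_insert_sdiff_singleton hvB₁ (hB.indep.subset (insert_subset hvB hIB))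

end Matroid

theorem stmt_13 {α : Type*} (M : Matroid α) [M.Finite]
    {B₁ B₂ : Set α} (h₁ : M.IsBase B₁) (h₂ : M.IsBase B₂) :
    ∃ φ : B₁ ≃ B₂, ∀ u : B₁,
      M.IsBase (insert (↑(φ u)) (B₁ \ {(u : α)})) :=
  exists_equiv_forall_rel_of_hall h₁.finite h₂.finite (h₂.ncard_eq_ncard_of_isBase h₁).le
    (fun u v ↦ M.IsBase (insert v (B₁ \ {u}))) fun _ hA ↦ h₁.ncard_le_ncard_exchangeable h₂ hA
end
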